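/- arXiv:2602.15577 — 5 statements merged into one kernel-verified Lean document; each statement's English description precedes it below -/
import Mathlib

section
/- The graded Jacobi identities of the contact Lie superalgebra K(1,1;n) = W(1;n) ⊕ O_(div) hold: (i) for all f, x, y ∈ O(1;n), ∂(f · x) · y + x · ∂(f · y) = f · ∂(x · y) − ∂(f) · x · y (compatibility of the even–odd action with the odd–odd bracket [x,y] = −x·y·∂; this identity requires characteristic 3); and (ii) for all x, y, z ∈ O(1;n), ∂(x·y·z) + ∂(y·z·x) + ∂(z·x·y) = 0 (the super-Jacobi identity on three odd elements). -/
/-!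
Extending coordinates by zero identifies `O(1;n)` with the truncation below degree `3^n` of the
binomial convolution `(f ⋆ g)_m = ∑_{i+j=m} binom(m,i) f_i g_j` on sequences, which is commutative
and associative, and for which the shift `∂` is a derivation by Pascal's rule. Truncation only
breaks the Leibniz rule at the top degree `3^n`, where the coefficients `binom(3^n, i)`,
`0 < i < 3^n`, vanish modulo `3`; so in characteristic `3`, `∂` is a derivation of `O(1;n)`.
Expanding with the Leibniz rule reduces identity (i) to `3 · ∂f·x·y = 0`, and by commutativity
and associativity the three terms of identity (ii) coincide.
-/

/-- The product of the divided power algebra `O(1;n)`, written in coordinates with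
respect to the basis `e_0, …, e_{3^n - 1}`: it is the bilinear product determined by
`e_i · e_j = binom(i+j, i) e_{i+j}`, where `e_k = 0` for `k ≥ 3^n`. -/
def omul (Φ : Type*) [Field Φ] (n : ℕ) (f g : Fin (3 ^ n) → Φ) : Fin (3 ^ n) → Φ :=
  fun k => ∑ i : Fin (3 ^ n), ∑ j : Fin (3 ^ n),
    if (i : ℕ) + (j : ℕ) = (k : ℕ)
    then (((i : ℕ) + (j : ℕ)).choose (i : ℕ) : Φ) * f i * g j
    else 0

/-- The basis element `e_i` of `O(1;n)`. -/
def eb (Φ : Type*) [Field Φ] (n : ℕ) (i : Fin (3 ^ n)) : Fin (3 ^ n) → Φ :=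
  Pi.single i 1

/-- The linear map `∂` on `O(1;n)`, with `∂ e_0 = 0` and `∂ e_i = e_{i-1}`;
in coordinates, `(∂ f)_k = f_{k+1}` (interpreted as `0` when `k + 1 ≥ 3^n`). -/
def odel (Φ : Type*) [Field Φ] (n : ℕ) (f : Fin (3 ^ n) → Φ) : Fin (3 ^ n) → Φ :=
  fun k => if h : (k : ℕ) + 1 < 3 ^ n then f ⟨(k : ℕ) + 1, h⟩ else 0

open Finset

section BinomialConvolution

variable {R : Type*} [CommSemiring R]

def binomConv (f g : ℕ → R) (m : ℕ) : R :=
  ∑ p ∈ antidiagonal m, (m.choose p.1 : R) * f p.1 * g p.2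

theorem binomConv_comm (f g : ℕ → R) : binomConv f g = binomConv g f := by
  funext m
  rw [binomConv, ← Nat.sum_antidiagonal_swap]
  refine sum_congr rfl fun p hp => ?_
  rw [Nat.choose_symm_of_eq_add (HasAntidiagonal.mem_antidiagonal.mp hp).symm]
  simp only [Prod.fst_swap, Prod.snd_swap]
  ring

theorem binomConv_succ (f g : ℕ → R) (m : ℕ) :
    binomConv f g (m + 1) =
      binomConv (fun i => f (i + 1)) g m + binomConv f (fun i => g (i + 1)) m := by
  simp only [binomConv, mul_assoc]
  rw [sum_antidiagonal_choose_succ_mul (fun i j => f i * g j), add_comm]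
  congr 1
  refine sum_congr rfl fun p hp => ?_
  rw [Nat.choose_symm_of_eq_add (HasAntidiagonal.mem_antidiagonal.mp hp).symm]

theorem binomConv_congr {f f' g g' : ℕ → R} {m : ℕ} (hf : ∀ i ≤ m, f i = f' i)
    (hg : ∀ i ≤ m, g i = g' i) : binomConv f g m = binomConv f' g' m :=
  sum_congr rfl fun p hp => by
    rw [hf p.1 (HasAntidiagonal.antidiagonal.fst_le hp),
      hg p.2 (HasAntidiagonal.antidiagonal.snd_le hp)]

theorem binomConv_assoc (f g h : ℕ → R) :
    binomConv (binomConv f g) h = binomConv f (binomConv g h) := by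
  funext m
  simp only [binomConv, sum_mul, mul_sum, sum_sigma']
  refine sum_nbij' (fun x => ⟨(x.2.1, x.2.2 + x.1.2), (x.2.2, x.1.2)⟩)
    (fun x => ⟨(x.1.1 + x.2.1, x.2.2), (x.1.1, x.2.1)⟩) ?_ ?_ ?_ ?_ ?_
  · rintro ⟨⟨i, c⟩, ⟨a, b⟩⟩ hx
    simp only [mem_sigma, HasAntidiagonal.mem_antidiagonal, and_true] at hx ⊢
    omega
  · rintro ⟨⟨a, j⟩, ⟨b, c⟩⟩ hx
    simp only [mem_sigma, HasAntidiagonal.mem_antidiagonal, and_true] at hx ⊢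
    omega
  · rintro ⟨⟨i, c⟩, ⟨a, b⟩⟩ hx
    simp only [mem_sigma, HasAntidiagonal.mem_antidiagonal] at hx
    obtain ⟨rfl, rfl⟩ := hx
    rfl
  · rintro ⟨⟨a, j⟩, ⟨b, c⟩⟩ hx
    simp only [mem_sigma, HasAntidiagonal.mem_antidiagonal] at hx
    obtain ⟨rfl, rfl⟩ := hx
    rfl
  · rintro ⟨⟨i, c⟩, ⟨a, b⟩⟩ hx
    simp only [mem_sigma, HasAntidiagonal.mem_antidiagonal] at hx
    obtain ⟨rfl, rfl⟩ := hx
    have hc : (a + b + c).choose (a + b) * (a + b).choose a =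
        (a + b + c).choose a * (b + c).choose b := by
      rw [Nat.choose_mul (by omega), show a + b + c - a = b + c by omega,
        Nat.add_sub_cancel_left]
    calc _ = ((a + b + c).choose (a + b) * (a + b).choose a : ℕ) * (f a * g b * h c) := by
          push_cast; ring
      _ = _ := by rw [hc]; push_cast; ring

theorem binomConv_prime_pow_eq_zero {p k : ℕ} [CharP R p] (hp : p.Prime) {f g : ℕ → R}
    (hf : f (p ^ k) = 0) (hg : g (p ^ k) = 0) : binomConv f g (p ^ k) = 0 := by
  refine sum_eq_zero fun ⟨a, b⟩ hab => ?_
  rw [HasAntidiagonal.mem_antidiagonal] at hab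
  dsimp only
  rcases Nat.eq_zero_or_pos a with rfl | ha
  · simp_all
  rcases Nat.eq_zero_or_pos b with rfl | hb
  · simp_all
  rw [(CharP.cast_eq_zero_iff R p _).mpr (hp.dvd_choose_pow ha.ne' (by omega)), zero_mul,
    zero_mul]

end BinomialConvolution

section ExtendByZero

variable {M : Type*} [Zero M]

def extendByZero {N : ℕ} (f : Fin N → M) (m : ℕ) : M :=
  if h : m < N then f ⟨m, h⟩ else 0

theorem extendByZero_of_lt {N m : ℕ} (f : Fin N → M) (h : m < N) :
    extendByZero f m = f ⟨m, h⟩ := dif_pos h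

theorem extendByZero_of_le {N m : ℕ} (f : Fin N → M) (h : N ≤ m) : extendByZero f m = 0 :=
  dif_neg h.not_gt

end ExtendByZero

section DividedPowerAlgebra

variable {Φ : Type*} [Field Φ] {n : ℕ}

theorem omul_apply (f g : Fin (3 ^ n) → Φ) (k : Fin (3 ^ n)) :
    omul Φ n f g k = binomConv (extendByZero f) (extendByZero g) k := by
  have hk : {p ∈ range (3 ^ n) ×ˢ range (3 ^ n) | p.1 + p.2 = (k : ℕ)} =
      antidiagonal (k : ℕ) := by
    ext ⟨a, b⟩
    simp only [mem_filter, mem_product, mem_range, HasAntidiagonal.mem_antidiagonal]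
    omega
  unfold binomConv
  rw [← hk, sum_filter, sum_product, ← Fin.sum_univ_eq_sum_range]
  refine sum_congr rfl fun i _ => ?_
  rw [← Fin.sum_univ_eq_sum_range]
  refine sum_congr rfl fun j _ => ?_
  split_ifs with h
  · rw [h, extendByZero_of_lt f i.isLt, extendByZero_of_lt g j.isLt]
  · rfl

theorem extendByZero_omul_of_lt (f g : Fin (3 ^ n) → Φ) {m : ℕ} (h : m < 3 ^ n) :
    extendByZero (omul Φ n f g) m = binomConv (extendByZero f) (extendByZero g) m := by
  rw [extendByZero_of_lt _ h, omul_apply]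

theorem extendByZero_omul [CharP Φ 3] (f g : Fin (3 ^ n) → Φ) {m : ℕ} (h : m ≤ 3 ^ n) :
    extendByZero (omul Φ n f g) m = binomConv (extendByZero f) (extendByZero g) m := by
  rcases h.lt_or_eq with h | rfl
  · exact extendByZero_omul_of_lt f g h
  · rw [extendByZero_of_le _ le_rfl, binomConv_prime_pow_eq_zero Nat.prime_three
      (extendByZero_of_le f le_rfl) (extendByZero_of_le g le_rfl)]

theorem odel_apply (f : Fin (3 ^ n) → Φ) (k : Fin (3 ^ n)) :
    odel Φ n f k = extendByZero f (k + 1) := rfl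

theorem extendByZero_odel (f : Fin (3 ^ n) → Φ) :
    extendByZero (odel Φ n f) = fun m => extendByZero f (m + 1) := by
  funext m
  by_cases h : m < 3 ^ n
  · rw [extendByZero_of_lt _ h, odel_apply]
  · rw [extendByZero_of_le _ (not_lt.mp h), extendByZero_of_le f (by omega)]

theorem omul_comm (f g : Fin (3 ^ n) → Φ) : omul Φ n f g = omul Φ n g f := by
  funext k
  rw [omul_apply, omul_apply, binomConv_comm]

theorem omul_assoc (f g h : Fin (3 ^ n) → Φ) :
    omul Φ n (omul Φ n f g) h = omul Φ n f (omul Φ n g h) := by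
  funext k
  rw [omul_apply, omul_apply]
  calc binomConv (extendByZero (omul Φ n f g)) (extendByZero h) k
      = binomConv (binomConv (extendByZero f) (extendByZero g)) (extendByZero h) k :=
        binomConv_congr (fun i hi => extendByZero_omul_of_lt f g (hi.trans_lt k.isLt))
          fun _ _ => rfl
    _ = binomConv (extendByZero f) (binomConv (extendByZero g) (extendByZero h)) k := by
        rw [binomConv_assoc]
    _ = binomConv (extendByZero f) (extendByZero (omul Φ n g h)) k :=
        (binomConv_congr (fun _ _ => rfl)
          fun i hi => extendByZero_omul_of_lt g h (hi.trans_lt k.isLt)).symm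

theorem omul_left_comm (f g h : Fin (3 ^ n) → Φ) :
    omul Φ n f (omul Φ n g h) = omul Φ n g (omul Φ n f h) := by
  rw [← omul_assoc, omul_comm f g, omul_assoc]

theorem omul_add_left (f g h : Fin (3 ^ n) → Φ) :
    omul Φ n (f + g) h = omul Φ n f h + omul Φ n g h := by
  funext k
  simp only [omul, Pi.add_apply, mul_add, add_mul, ite_add_zero, sum_add_distrib]

theorem omul_add_right (f g h : Fin (3 ^ n) → Φ) :
    omul Φ n f (g + h) = omul Φ n f g + omul Φ n f h := by
  rw [omul_comm, omul_add_left, omul_comm g, omul_comm h]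

theorem odel_omul [CharP Φ 3] (f g : Fin (3 ^ n) → Φ) :
    odel Φ n (omul Φ n f g) = omul Φ n (odel Φ n f) g + omul Φ n f (odel Φ n g) := by
  funext k
  rw [odel_apply, extendByZero_omul f g k.isLt, binomConv_succ, Pi.add_apply, omul_apply,
    omul_apply, extendByZero_odel, extendByZero_odel]

end DividedPowerAlgebra

theorem contact_super_jacobi_general (Φ : Type*) [Field Φ] [CharP Φ 3] (n : ℕ) :
    (∀ f x y : Fin (3 ^ n) → Φ,
      omul Φ n (odel Φ n (omul Φ n f x)) y + omul Φ n x (odel Φ n (omul Φ n f y)) =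
        omul Φ n f (odel Φ n (omul Φ n x y)) - omul Φ n (odel Φ n f) (omul Φ n x y)) ∧
    (∀ x y z : Fin (3 ^ n) → Φ,
      odel Φ n (omul Φ n (omul Φ n x y) z) + odel Φ n (omul Φ n (omul Φ n y z) x) +
        odel Φ n (omul Φ n (omul Φ n z x) y) = 0) := by
  have h3 : (3 : Φ) = 0 := CharP.cast_eq_zero Φ 3
  constructor
  · intro f x y
    rw [odel_omul f x, odel_omul f y, odel_omul x y, omul_add_left, omul_add_right,
      omul_add_right, omul_assoc (odel Φ n f), omul_assoc f, omul_left_comm x (odel Φ n f),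
      omul_left_comm x f]
    linear_combination (norm := module) h3 • omul Φ n (odel Φ n f) (omul Φ n x y)
  · intro x y z
    have hyzx : omul Φ n (omul Φ n y z) x = omul Φ n (omul Φ n x y) z := by
      rw [omul_comm _ x, omul_assoc]
    have hzxy : omul Φ n (omul Φ n z x) y = omul Φ n (omul Φ n x y) z := by
      rw [omul_comm z x, omul_assoc, omul_comm z y, omul_assoc]
    rw [hyzx, hzxy]
    linear_combination (norm := module) h3 • odel Φ n (omul Φ n (omul Φ n x y) z)

/-- The graded Jacobi identities of the contact Lie superalgebra
`K(1,1;n) = W(1;n) ⊕ O_(div)` (even part `W(1;n)` acting by `f∂ · g = ∂(f·g)`, odd-odd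
bracket `[x,y] = −x·y·∂`): (i) `∂(f·x)·y + x·∂(f·y) = f·∂(x·y) − ∂(f)·x·y` for all
`f, x, y ∈ O(1;n)` (this uses characteristic 3); and (ii)
`∂(x·y·z) + ∂(y·z·x) + ∂(z·x·y) = 0` for all `x, y, z ∈ O(1;n)`. -/
theorem contact_super_jacobi (Φ : Type*) [Field Φ] [CharP Φ 3] (n : ℕ) (hn : 1 ≤ n) :
    (∀ f x y : Fin (3 ^ n) → Φ,
      omul Φ n (odel Φ n (omul Φ n f x)) y + omul Φ n x (odel Φ n (omul Φ n f y)) =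
        omul Φ n f (odel Φ n (omul Φ n x y)) - omul Φ n (odel Φ n f) (omul Φ n x y)) ∧
    (∀ x y z : Fin (3 ^ n) → Φ,
      odel Φ n (omul Φ n (omul Φ n x y) z) + odel Φ n (omul Φ n (omul Φ n y z) x) +
        odel Φ n (omul Φ n (omul Φ n z x) y) = 0) :=
  contact_super_jacobi_general Φ n
end

section
/- The Witt algebra W(1;n) equals its derived algebra; concretely, the Φ-linear span of the set {f · ∂(g) − g · ∂(f) : f, g ∈ O(1;n)} is all of O(1;n). (Consequently, the Jordan algebra J associated to the J-ternary algebra O(1;n) is the whole of O(1;n) with its commutative product.) -/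
def wittBracket (Φ : Type*) [Field Φ] (n : ℕ) (f g : Fin (3 ^ n) → Φ) : Fin (3 ^ n) → Φ :=
  omul Φ n f (odel Φ n g) - omul Φ n g (odel Φ n f)

section DividedPowers

variable {Φ : Type*} [Field Φ] {n : ℕ}

@[simp]
lemma omul_zero (f : Fin (3 ^ n) → Φ) : omul Φ n f 0 = 0 := by
  funext k
  simp [omul]

lemma omul_eb_eb {i j k : Fin (3 ^ n)} (h : (i : ℕ) + j = k) :
    omul Φ n (eb Φ n i) (eb Φ n j) = (((i : ℕ) + j).choose i : Φ) • eb Φ n k := by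
  funext m
  simp only [omul, eb, Pi.single_apply, Pi.smul_apply, smul_eq_mul]
  rw [Fintype.sum_eq_single i, Fintype.sum_eq_single j]
  · simp [h, Fin.val_inj, eq_comm]
  all_goals intros; simp_all

lemma odel_eb_of_val_eq_zero {i : Fin (3 ^ n)} (hi : (i : ℕ) = 0) : odel Φ n (eb Φ n i) = 0 := by
  funext k
  simp only [odel, eb, Pi.single_apply, Fin.ext_iff, hi]
  simp

lemma odel_eb_of_val_eq_succ {i k : Fin (3 ^ n)} (hi : (i : ℕ) = k + 1) :
    odel Φ n (eb Φ n i) = eb Φ n k := by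
  funext m
  simp only [odel, eb, Pi.single_apply, Fin.ext_iff, hi]
  have := i.isLt
  split_ifs <;> first | rfl | omega

lemma wittBracket_eb_eb_zero {i k z : Fin (3 ^ n)} (hi : (i : ℕ) = k + 1) (hz : (z : ℕ) = 0) :
    wittBracket Φ n (eb Φ n i) (eb Φ n z) = -eb Φ n k := by
  rw [wittBracket, odel_eb_of_val_eq_zero hz, odel_eb_of_val_eq_succ hi,
    omul_eb_eb (show (z : ℕ) + k = k by omega), hz]
  simp

lemma wittBracket_eb_one_eb {a b c : Fin (3 ^ n)} (ha : (a : ℕ) = 1) (hb : (b : ℕ) = c + 1) :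
    wittBracket Φ n (eb Φ n a) (eb Φ n b) = ((c : ℕ) : Φ) • eb Φ n b := by
  rw [wittBracket, odel_eb_of_val_eq_succ hb, odel_eb_of_val_eq_succ (k := ⟨0, by omega⟩) ha,
    omul_eb_eb (show (a : ℕ) + c = b by omega), omul_eb_eb (show (b : ℕ) + 0 = b by omega),
    ha, Nat.choose_one_right, Nat.add_zero, Nat.choose_self, ← sub_smul, add_comm]
  push_cast
  ring_nf

end DividedPowers

/-- The Witt algebra `W(1;n)` equals its derived algebra: the `Φ`-linear span of the
set `{f·∂(g) − g·∂(f) : f, g ∈ O(1;n)}` is all of `O(1;n)`. -/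
theorem witt_perfect (Φ : Type*) [Field Φ] [CharP Φ 3] (n : ℕ) (hn : 1 ≤ n) :
    Submodule.span Φ
        {x : Fin (3 ^ n) → Φ |
          ∃ f g, x = omul Φ n f (odel Φ n g) - omul Φ n g (odel Φ n f)} = ⊤ := by
  set W := Submodule.span Φ
    {x : Fin (3 ^ n) → Φ | ∃ f g, x = omul Φ n f (odel Φ n g) - omul Φ n g (odel Φ n f)}
  have bracket_mem (f g) : wittBracket Φ n f g ∈ W := Submodule.subset_span ⟨f, g, rfl⟩
  have h3 : 3 ∣ 3 ^ n := dvd_pow_self 3 (by omega)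
  have hpos : 0 < 3 ^ n := by positivity
  refine eq_top_iff.2 ((Pi.basisFun Φ (Fin (3 ^ n))).span_eq ▸ Submodule.span_le.2 ?_)
  rintro _ ⟨k, rfl⟩
  rw [SetLike.mem_coe, Pi.basisFun_apply]
  change eb Φ n k ∈ W
  by_cases hk : (k : ℕ) + 1 < 3 ^ n
  · rw [← neg_neg (eb Φ n k), ← wittBracket_eb_eb_zero (i := ⟨k + 1, hk⟩) (z := ⟨0, hpos⟩) rfl rfl]
    exact W.neg_mem (bracket_mem _ _)
  · have hc : ((3 ^ n - 2 : ℕ) : Φ) ≠ 0 := by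
      rw [Ne, CharP.cast_eq_zero_iff Φ 3]
      omega
    rw [← W.smul_mem_iff hc, ← wittBracket_eb_one_eb (a := ⟨1, by omega⟩)
      (c := ⟨3 ^ n - 2, by omega⟩) rfl (by dsimp only; omega)]
    exact bracket_mem _ _
end

section
/- The triple product L on O(1;n) satisfies the first J-ternary axiom: for all x, y, u, v, w ∈ O(1;n), L_{x,y}(L_{u,v}w) − L_{u,v}(L_{x,y}w) = L_{(L_{x,y}u), v}(w) + L_{u, (L_{y,x}v)}(w). Equivalently, as operators on O: [L_{x,y}, L_{u,v}] = L_{(L_{x,y}u), v} + L_{u, (L_{y,x}v)}. -/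
/-- The triple product `L_{f,g}h = f·g·∂(h) − h·g·∂(f)` on `O(1;n)`. -/
def Lt (Φ : Type*) [Field Φ] (n : ℕ) (f g h : Fin (3 ^ n) → Φ) : Fin (3 ^ n) → Φ :=
  omul Φ n (omul Φ n f g) (odel Φ n h) - omul Φ n (omul Φ n h g) (odel Φ n f)

open Finset

section TernaryProduct

variable {R A : Type*} [CommSemiring R] [CommRing A] [Algebra R A]

def Derivation.ternaryProduct (D : Derivation R A A) (x y h : A) : A := x * y * D h - h * y * D x

theorem Derivation.ternaryProduct_commutator (D : Derivation R A A) (x y u v w : A) :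
    D.ternaryProduct x y (D.ternaryProduct u v w) - D.ternaryProduct u v (D.ternaryProduct x y w) =
      D.ternaryProduct (D.ternaryProduct x y u) v w +
        D.ternaryProduct u (D.ternaryProduct y x v) w := by
  simp only [ternaryProduct, map_sub, Derivation.leibniz, smul_eq_mul]
  ring

end TernaryProduct

theorem Nat.Prime.dvd_choose_add_of_lt_pow {p n i j : ℕ} (hp : p.Prime) (hi : i < p ^ n)
    (hj : j < p ^ n) (h : p ^ n ≤ i + j) : p ∣ (i + j).choose i := by
  have := Fact.mk hp
  obtain _ | n := n
  · simp at hi hj h; omega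
  have hlog : Nat.log p (j + i) < n + 2 :=
    Nat.log_lt_of_lt_pow (by omega) (by rw [pow_succ]; nlinarith [hp.two_le])
  have hcarry : n + 1 ∈ {m ∈ Ico 1 (n + 2) | p ^ m ≤ i % p ^ m + j % p ^ m} := by
    simp [Nat.mod_eq_of_lt hi, Nat.mod_eq_of_lt hj, h]
  rw [add_comm]
  apply dvd_of_one_le_padicValNat
  rw [padicValNat_choose' hlog]
  exact Finset.card_pos.mpr ⟨_, hcarry⟩

/-- Hurwitz series over `R`: `a.coeff k` is the coefficient of the `k`-th divided power
`x^k / k!`, so that `x^i / i! * x^j / j! = (i + j).choose i * x^(i+j) / (i+j)!`. -/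
@[ext]
structure HurwitzSeries (R : Type*) where
  coeff : ℕ → R

namespace HurwitzSeries

variable {R : Type*}

def derivativeFun (a : HurwitzSeries R) : HurwitzSeries R := ⟨fun k => a.coeff (k + 1)⟩

@[simp] theorem coeff_derivativeFun (a : HurwitzSeries R) (k : ℕ) :
    (derivativeFun a).coeff k = a.coeff (k + 1) := rfl

variable [CommRing R]

instance : Zero (HurwitzSeries R) := ⟨⟨0⟩⟩
instance : One (HurwitzSeries R) := ⟨⟨fun k => if k = 0 then 1 else 0⟩⟩
instance : Add (HurwitzSeries R) := ⟨fun a b => ⟨a.coeff + b.coeff⟩⟩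
instance : Neg (HurwitzSeries R) := ⟨fun a => ⟨-a.coeff⟩⟩
instance : Sub (HurwitzSeries R) := ⟨fun a b => ⟨a.coeff - b.coeff⟩⟩
instance : SMul ℕ (HurwitzSeries R) := ⟨fun n a => ⟨n • a.coeff⟩⟩
instance : SMul ℤ (HurwitzSeries R) := ⟨fun n a => ⟨n • a.coeff⟩⟩

instance : Mul (HurwitzSeries R) :=
  ⟨fun a b =>
    ⟨fun k => ∑ p ∈ antidiagonal k, (k.choose p.1 : R) * a.coeff p.1 * b.coeff p.2⟩⟩

instance : AddCommGroup (HurwitzSeries R) :=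
  Function.Injective.addCommGroup coeff (fun _ _ => HurwitzSeries.ext) rfl (fun _ _ => rfl)
    (fun _ => rfl) (fun _ _ => rfl) (fun _ _ => rfl) (fun _ _ => rfl)

@[simp] theorem coeff_zero : (0 : HurwitzSeries R).coeff = 0 := rfl
@[simp] theorem coeff_add (a b : HurwitzSeries R) : (a + b).coeff = a.coeff + b.coeff := rfl

theorem coeff_one (k : ℕ) : (1 : HurwitzSeries R).coeff k = if k = 0 then 1 else 0 := rfl

theorem coeff_mul (a b : HurwitzSeries R) (k : ℕ) :
    (a * b).coeff k = ∑ p ∈ antidiagonal k, (k.choose p.1 : R) * a.coeff p.1 * b.coeff p.2 :=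
  rfl

protected theorem mul_comm (a b : HurwitzSeries R) : a * b = b * a := by
  ext k
  rw [coeff_mul, coeff_mul, ← Nat.sum_antidiagonal_swap]
  refine sum_congr rfl fun p hp => ?_
  rw [HasAntidiagonal.mem_antidiagonal] at hp
  rw [Prod.fst_swap, Prod.snd_swap, ← hp, Nat.choose_symm_add]
  ring

theorem choose_mul_choose_add (i j l : ℕ) :
    ((i + j + l).choose (i + j) * (i + j).choose i : R) =
      (i + j + l).choose i * (j + l).choose j := by
  norm_cast
  rw [Nat.choose_mul (Nat.le_add_right i j)]
  simp only [add_assoc, Nat.add_sub_cancel_left]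

protected theorem mul_assoc (a b c : HurwitzSeries R) : a * b * c = a * (b * c) := by
  ext n
  simp only [coeff_mul, sum_mul, mul_sum, sum_sigma']
  refine sum_nbij' (fun x => ⟨(x.2.1, x.2.2 + x.1.2), (x.2.2, x.1.2)⟩)
    (fun x => ⟨(x.1.1 + x.2.1, x.2.2), (x.1.1, x.2.1)⟩) ?_ ?_ ?_ ?_ ?_
  all_goals rintro ⟨⟨i, j⟩, ⟨k, l⟩⟩ h
  all_goals simp only [mem_sigma, HasAntidiagonal.mem_antidiagonal] at h
  all_goals obtain ⟨rfl, rfl⟩ := h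
  · simp [add_assoc]
  · simp [add_assoc]
  · rfl
  · rfl
  · linear_combination (a.coeff k * b.coeff l * c.coeff j) * choose_mul_choose_add (R := R) k l j

protected theorem one_mul (a : HurwitzSeries R) : 1 * a = a := by
  ext k
  rw [coeff_mul, Nat.sum_antidiagonal_eq_sum_range_succ_mk, sum_range_succ']
  simp [coeff_one]

instance : CommRing (HurwitzSeries R) where
  mul_assoc := HurwitzSeries.mul_assoc
  mul_comm := HurwitzSeries.mul_comm
  one_mul := HurwitzSeries.one_mul
  mul_one a := by rw [HurwitzSeries.mul_comm, HurwitzSeries.one_mul]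
  left_distrib a b c := by
    ext k; simp only [coeff_mul, coeff_add, Pi.add_apply, ← sum_add_distrib, mul_add]
  right_distrib a b c := by
    ext k; simp only [coeff_mul, coeff_add, Pi.add_apply, ← sum_add_distrib, mul_add, add_mul]
  zero_mul a := by ext k; simp [coeff_mul]
  mul_zero a := by ext k; simp [coeff_mul]

theorem derivativeFun_mul (a b : HurwitzSeries R) :
    derivativeFun (a * b) = a * derivativeFun b + derivativeFun a * b := by
  ext k
  -- both ways of peeling off an end of `antidiagonal (k + 1)` from this sum
  set S := ∑ p ∈ antidiagonal (k + 1), (k.choose p.1 : R) * a.coeff p.1 * b.coeff p.2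
  have hS : S = (a * derivativeFun b).coeff k := by
    simp [S, Nat.sum_antidiagonal_succ', coeff_mul]
  have hS' : S = a.coeff 0 * b.coeff (k + 1) +
      ∑ p ∈ antidiagonal k, (k.choose (p.1 + 1) : R) * a.coeff (p.1 + 1) * b.coeff p.2 := by
    simp [S, Nat.sum_antidiagonal_succ]
  calc (derivativeFun (a * b)).coeff k
      = a.coeff 0 * b.coeff (k + 1) + ∑ p ∈ antidiagonal k,
          ((k.choose p.1 : R) + k.choose (p.1 + 1)) * a.coeff (p.1 + 1) * b.coeff p.2 := by
        simp [coeff_mul, Nat.sum_antidiagonal_succ, Nat.choose_succ_succ']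
    _ = S + (derivativeFun a * b).coeff k := by
        simp only [hS', coeff_mul, coeff_derivativeFun, add_mul, sum_add_distrib]; ring
    _ = (a * derivativeFun b + derivativeFun a * b).coeff k := by rw [hS]; rfl

def derivative : Derivation ℤ (HurwitzSeries R) (HurwitzSeries R) :=
  Derivation.mk' (AddMonoidHom.toIntLinearMap ⟨⟨derivativeFun, rfl⟩, fun _ _ => rfl⟩)
    fun a b => by
      change derivativeFun (a * b) = a • derivativeFun b + b • derivativeFun a
      rw [derivativeFun_mul, smul_eq_mul, smul_eq_mul, mul_comm b]

theorem coeff_derivative (a : HurwitzSeries R) (k : ℕ) :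
    (derivative a).coeff k = a.coeff (k + 1) := rfl

def ofFin (N : ℕ) : (Fin N → R) →+ HurwitzSeries R where
  toFun f := ⟨fun k => if h : k < N then f ⟨k, h⟩ else 0⟩
  map_zero' := by ext k; simp
  map_add' f g := by ext k; simp only [Pi.add_apply, coeff_add]; split_ifs <;> simp

variable {N : ℕ}

theorem coeff_ofFin (f : Fin N → R) (k : ℕ) :
    (ofFin N f).coeff k = if h : k < N then f ⟨k, h⟩ else 0 := rfl

@[simp] theorem coeff_ofFin_val (f : Fin N → R) (i : Fin N) : (ofFin N f).coeff i = f i := by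
  simp [coeff_ofFin]

theorem ofFin_injective : Function.Injective (ofFin N : (Fin N → R) → HurwitzSeries R) :=
  fun f g h => funext fun i => by simpa using congrArg (fun a => a.coeff i) h

theorem coeff_ofFin_mul (f g : Fin N → R) (k : ℕ) :
    (ofFin N f * ofFin N g).coeff k = ∑ i : Fin N, ∑ j : Fin N,
      if (i : ℕ) + j = k then (((i : ℕ) + j).choose i : R) * f i * g j else 0 := by
  rw [← Fintype.sum_prod_type', ← sum_filter, coeff_mul]
  symm
  refine sum_bij_ne_zero (fun x _ _ => ((x.1 : ℕ), (x.2 : ℕ))) ?_ ?_ ?_ ?_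
  · rintro ⟨i, j⟩ hij -
    simpa using hij
  · rintro ⟨i₁, j₁⟩ - - ⟨i₂, j₂⟩ - - h
    simpa [Fin.ext_iff] using h
  · rintro ⟨a, b⟩ hab hne
    have ha : a < N := by
      by_contra ha
      simp [coeff_ofFin, ha] at hne
    have hb : b < N := by
      by_contra hb
      simp [coeff_ofFin, hb] at hne
    rw [HasAntidiagonal.mem_antidiagonal] at hab
    exact ⟨(⟨a, ha⟩, ⟨b, hb⟩), by simpa using hab,
      by simpa [coeff_ofFin, ha, hb, hab] using hne, rfl⟩
  · rintro ⟨i, j⟩ hij -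
    rw [mem_filter] at hij
    simp [← hij.2]

end HurwitzSeries

section DividedPowerAlgebra

open HurwitzSeries

variable {Φ : Type*} [Field Φ] {n : ℕ}

theorem ofFin_odel (f : Fin (3 ^ n) → Φ) : ofFin _ (odel Φ n f) = derivative (ofFin _ f) := by
  ext k
  simp only [coeff_ofFin, coeff_derivative, odel]
  split_ifs <;> first | rfl | omega

theorem ofFin_omul [CharP Φ 3] (f g : Fin (3 ^ n) → Φ) :
    ofFin _ (omul Φ n f g) = ofFin _ f * ofFin _ g := by
  ext k
  rw [coeff_ofFin_mul, coeff_ofFin]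
  split_ifs with hk
  · rfl
  · refine (sum_eq_zero fun i _ => sum_eq_zero fun j _ => ?_).symm
    split_ifs with hij
    · have h3 := Nat.prime_three.dvd_choose_add_of_lt_pow i.2 j.2 (by omega)
      rw [(CharP.cast_eq_zero_iff Φ 3 _).mpr h3, zero_mul, zero_mul]
    · rfl

theorem ofFin_Lt [CharP Φ 3] (f g h : Fin (3 ^ n) → Φ) :
    ofFin _ (Lt Φ n f g h) = derivative.ternaryProduct (ofFin _ f) (ofFin _ g) (ofFin _ h) := by
  simp only [Lt, Derivation.ternaryProduct, map_sub, ofFin_omul, ofFin_odel]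

end DividedPowerAlgebra

theorem Jternary_first_axiom_general (Φ : Type*) [Field Φ] [CharP Φ 3] (n : ℕ) :
    ∀ x y u v w : Fin (3 ^ n) → Φ,
      Lt Φ n x y (Lt Φ n u v w) - Lt Φ n u v (Lt Φ n x y w) =
        Lt Φ n (Lt Φ n x y u) v w + Lt Φ n u (Lt Φ n y x v) w := by
  intro x y u v w
  apply HurwitzSeries.ofFin_injective
  simp only [map_sub, map_add, ofFin_Lt]
  exact HurwitzSeries.derivative.ternaryProduct_commutator _ _ _ _ _

/-- The triple product `L` on `O(1;n)` satisfies the first J-ternary axiom: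
`[L_{x,y}, L_{u,v}] = L_{L_{x,y}u, v} + L_{u, L_{y,x}v}` as operators on `O(1;n)`. -/
theorem Jternary_first_axiom (Φ : Type*) [Field Φ] [CharP Φ 3] (n : ℕ) (hn : 1 ≤ n) :
    ∀ x y u v w : Fin (3 ^ n) → Φ,
      Lt Φ n x y (Lt Φ n u v w) - Lt Φ n u v (Lt Φ n x y w) =
        Lt Φ n (Lt Φ n x y u) v w + Lt Φ n u (Lt Φ n y x v) w :=
  Jternary_first_axiom_general Φ n
end

section
/- The triple product L on O(1;n) satisfies the second J-ternary axiom: for all x, y, z ∈ O(1;n), L_{x,y}(z) − L_{z,y}(x) = L_{z,x}(y) − L_{x,z}(y). (This identity uses that the characteristic is 3, i.e., that 2 = −1 in Φ.) Together with the first axiom, O(1;n) equipped with the triple product (x,y,z) ↦ L_{x,y}z is a J-ternary algebra. -/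
/-- The triple product `L` on `O(1;n)` satisfies the second J-ternary axiom:
`L_{x,y}z − L_{z,y}x = L_{z,x}y − L_{x,z}y` (this uses `2 = −1` in characteristic 3).
Together with the first axiom, `O(1;n)` with `(x,y,z) ↦ L_{x,y}z` is a J-ternary
algebra. -/
theorem Jternary_second_axiom (Φ : Type*) [Field Φ] [CharP Φ 3] (n : ℕ) (hn : 1 ≤ n) :
    ∀ x y z : Fin (3 ^ n) → Φ,
      Lt Φ n x y z - Lt Φ n z y x = Lt Φ n z x y - Lt Φ n x z y := by
  have hc : ∀ f g : Fin (3 ^ n) → Φ, omul Φ n f g = omul Φ n g f := by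
    intro f g
    funext k
    unfold omul
    rw [Finset.sum_comm]
    refine Finset.sum_congr rfl fun i _ => Finset.sum_congr rfl fun j _ => ?_
    rw [add_comm (j : ℕ) (i : ℕ)]
    split_ifs with h
    · have hs := Nat.choose_symm (Nat.le_add_left (j : ℕ) (i : ℕ))
      rw [Nat.add_sub_cancel] at hs
      rw [← hs]
      ring
    · rfl
  intro x y z
  rw [Lt, Lt, Lt, Lt, hc z y, hc z x, hc y x]
  set A := omul Φ n (omul Φ n x y) (odel Φ n z) with hA
  set B := omul Φ n (omul Φ n y z) (odel Φ n x) with hB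
  set C := omul Φ n (omul Φ n x z) (odel Φ n y) with hC
  have h3 : (3 : Φ) = 0 := by
    exact_mod_cast (CharP.cast_eq_zero Φ 3)
  funext k
  simp only [Pi.sub_apply]
  linear_combination (A k - B k) * h3
end

section
/- Let V be a Φ-algebra and f : V → V a linear map with f³ = 0, and define δ_f : V → H ⊗ V by δ_f(v) = 1 ⊗ v + t ⊗ f(v) + t² ⊗ 2f²(v), where H = Φ[t]/(t³). Then δ_f is multiplicative, i.e., δ_f(v·w) = δ_f(v)·δ_f(w) in the algebra H ⊗ V for all v, w ∈ V, if and only if f is a derivation of V (f(v·w) = f(v)·w + v·f(w) for all v, w). In other words, V together with f is an algebra in Rep(α_3) if and only if f is a derivation. -/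
open scoped TensorProduct

/-- The truncated polynomial algebra `H = Φ[t]/(t³)`. -/
abbrev Hc (Φ : Type*) [Field Φ] : Type _ := AdjoinRoot (Polynomial.X ^ 3 : Polynomial Φ)

/-- The image of `t` in `Φ[t]/(t³)`. -/
noncomputable def tH (Φ : Type*) [Field Φ] : Hc Φ :=
  AdjoinRoot.root (Polynomial.X ^ 3 : Polynomial Φ)

/-- The coaction `δ_f(v) = 1 ⊗ v + t ⊗ f(v) + t² ⊗ 2f²(v)` associated to a linear
map `f : V → V`. -/
noncomputable def deltaOf {Φ : Type*} [Field Φ] {V : Type*} [AddCommGroup V] [Module Φ V]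
    (f : V →ₗ[Φ] V) : V →ₗ[Φ] Hc Φ ⊗[Φ] V :=
  TensorProduct.mk Φ (Hc Φ) V 1 + (TensorProduct.mk Φ (Hc Φ) V (tH Φ)).comp f +
    (TensorProduct.mk Φ (Hc Φ) V (tH Φ ^ 2)).comp ((2 : Φ) • (f.comp f))

/-!
The elements of `H ⊗ V` are exactly the sums `1 ⊗ a + t ⊗ b + t² ⊗ c`, with unique coefficients
since `1, t, t²` is a basis of `H`. Comparing coefficients, `δ_f(vw) = δ_f(v) δ_f(w)` says that
`f(vw) = f(v)w + vf(w)` (coefficient of `t`) and `2f²(vw) = 2f²(v)w + f(v)f(w) + 2vf²(w)`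
(coefficient of `t²`). The second identity follows from the first: iterating the Leibniz rule
gives `f²(vw) = f²(v)w + 2f(v)f(w) + vf²(w)`, and `2 · 2 = 1` in characteristic 3.
-/

open Polynomial TensorProduct

section Coefficients

variable {Φ : Type*} [Field Φ]

lemma tH_pow_three : tH Φ ^ 3 = 0 := by
  have h := AdjoinRoot.mk_self (f := (X ^ 3 : Φ[X]))
  rwa [map_pow, AdjoinRoot.mk_X] at h

variable (Φ) in
noncomputable def basisHc : Module.Basis (Fin 3) Φ (Hc Φ) :=
  (AdjoinRoot.powerBasis (pow_ne_zero 3 (X_ne_zero (R := Φ)))).basis.reindex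
    (finCongr (by simp))

lemma basisHc_apply (i : Fin 3) : basisHc Φ i = tH Φ ^ (i : ℕ) := by
  simp [basisHc, tH]

section Module

variable {V : Type*} [AddCommGroup V] [Module Φ V]

variable (Φ) in
noncomputable def ofCoeffs (a b c : V) : Hc Φ ⊗[Φ] V :=
  1 ⊗ₜ a + tH Φ ⊗ₜ b + (tH Φ ^ 2) ⊗ₜ c

lemma ofCoeffs_eq_sum (a b c : V) :
    ofCoeffs Φ a b c = ∑ i, basisHc Φ i ⊗ₜ ![a, b, c] i := by
  simp [ofCoeffs, Fin.sum_univ_three, basisHc_apply]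

lemma ofCoeffs_inj {a b c a' b' c' : V} :
    ofCoeffs Φ a b c = ofCoeffs Φ a' b' c' ↔ a = a' ∧ b = b' ∧ c = c' := by
  refine ⟨fun h => ?_, by rintro ⟨rfl, rfl, rfl⟩; rfl⟩
  have coeff (j : Fin 3) := congrArg (equivFinsuppOfBasisLeft (basisHc Φ) · j) h
  simp [ofCoeffs_eq_sum, Finsupp.single_apply] at coeff
  exact ⟨coeff 0, coeff 1, coeff 2⟩

lemma deltaOf_eq_ofCoeffs (f : V →ₗ[Φ] V) (v : V) :
    deltaOf f v = ofCoeffs Φ v (f v) ((2 : Φ) • f (f v)) := by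
  simp [deltaOf, ofCoeffs]

end Module

lemma ofCoeffs_mul_ofCoeffs {V : Type*} [Ring V] [Algebra Φ V] (a b c a' b' c' : V) :
    ofCoeffs Φ a b c * ofCoeffs Φ a' b' c' =
      ofCoeffs Φ (a * a') (a * b' + b * a') (a * c' + b * b' + c * a') := by
  have e1 : tH Φ * tH Φ = tH Φ ^ 2 := (sq _).symm
  have e2 : tH Φ * tH Φ ^ 2 = 0 := by rw [← pow_succ', tH_pow_three]
  have e3 : tH Φ ^ 2 * tH Φ = 0 := by rw [← pow_succ, tH_pow_three]
  have e4 : tH Φ ^ 2 * tH Φ ^ 2 = 0 := by rw [← pow_add, pow_succ, tH_pow_three, zero_mul]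
  simp only [ofCoeffs, mul_add, add_mul, Algebra.TensorProduct.tmul_mul_tmul, one_mul, mul_one,
    e1, e2, e3, e4, zero_tmul, add_zero, tmul_add]
  abel

end Coefficients

section Coaction

variable {Φ : Type*} [Field Φ] {V : Type*} [Ring V] [Algebra Φ V]

lemma deltaOf_map_mul_iff (f : V →ₗ[Φ] V) (v w : V) :
    deltaOf f (v * w) = deltaOf f v * deltaOf f w ↔
      f (v * w) = f v * w + v * f w ∧
        (2 : Φ) • f (f (v * w)) = v * (2 : Φ) • f (f w) + f v * f w + (2 : Φ) • f (f v) * w := by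
  rw [deltaOf_eq_ofCoeffs, deltaOf_eq_ofCoeffs, deltaOf_eq_ofCoeffs, ofCoeffs_mul_ofCoeffs,
    ofCoeffs_inj]
  simp only [true_and, add_comm (v * f w)]

lemma two_smul_map_map_mul [CharP Φ 3] {f : V →ₗ[Φ] V}
    (hf : ∀ v w, f (v * w) = f v * w + v * f w) (v w : V) :
    (2 : Φ) • f (f (v * w)) = v * (2 : Φ) • f (f w) + f v * f w + (2 : Φ) • f (f v) * w := by
  have two_mul_two : (2 : Φ) * 2 = 1 := by linear_combination CharP.cast_eq_zero Φ 3
  have leibniz_two : f (f (v * w)) = f (f v) * w + (2 : Φ) • (f v * f w) + v * f (f w) := by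
    rw [hf, map_add, hf, hf, two_smul]
    abel
  rw [leibniz_two]
  simp only [smul_add, smul_smul, two_mul_two, one_smul, smul_mul_assoc, mul_smul_comm]
  abel

end Coaction

theorem rep_alpha3_algebra_iff_derivation_general
    (Φ : Type*) [Field Φ] [CharP Φ 3]
    (V : Type*) [Ring V] [Algebra Φ V]
    (f : V →ₗ[Φ] V) :
    (∀ v w : V, deltaOf f (v * w) = deltaOf f v * deltaOf f w) ↔
      (∀ v w : V, f (v * w) = f v * w + v * f w) := by
  simp only [deltaOf_map_mul_iff]
  exact ⟨fun h v w => (h v w).1, fun h v w => ⟨h v w, two_smul_map_map_mul h v w⟩⟩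

/-- For a `Φ`-algebra `V` and a linear map `f : V → V` with `f³ = 0`, the coaction
`δ_f(v) = 1⊗v + t⊗f(v) + t²⊗2f²(v)` is multiplicative (for the componentwise algebra
structure on `H ⊗ V`) if and only if `f` is a derivation of `V`; i.e. `(V, f)` is an
algebra in `Rep(α₃)` iff `f` is a derivation. -/
theorem rep_alpha3_algebra_iff_derivation
    (Φ : Type*) [Field Φ] [CharP Φ 3]
    (V : Type*) [Ring V] [Algebra Φ V]
    (f : V →ₗ[Φ] V) (hf : f ∘ₗ f ∘ₗ f = 0) :
    (∀ v w : V, deltaOf f (v * w) = deltaOf f v * deltaOf f w) ↔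
      (∀ v w : V, f (v * w) = f v * w + v * f w) :=
  rep_alpha3_algebra_iff_derivation_general Φ V f
end
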